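/- Let x,y,z ≥ 0 with x ≤ 1 and 2y+z ≤ 1, and set s₁ = √(1−x), s₂ = √(1−2y−z). Then for every ρ ∈ M_4(ℂ), the Pauli twirl (1/16) Σ_{P ∈ P₂} P Φ_{x,y,z}(P ρ P†) P† equals the Pauli channel Σ_{P ∈ P₂} q_P · P ρ P†, where q_{𝟙⊗𝟙} = ((1+2s₁+s₂)/4)², q_{𝟙⊗Z} = q_{Z⊗𝟙} = ((1−s₂)/4)², q_{Z⊗Z} = ((1−2s₁+s₂)/4)², q_P = ((√x+√y)/4)² for P ∈ {𝟙⊗X, 𝟙⊗Y, X⊗𝟙, Y⊗𝟙}, q_P = ((√x−√y)/4)² for P ∈ {Z⊗X, Z⊗Y, X⊗Z, Y⊗Z}, and q_P = z/16 for P ∈ {X⊗X, X⊗Y, Y⊗X, Y⊗Y}. -/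

import Mathlib

open Matrix Kronecker

/-- The four Pauli matrices `𝟙, X, Y, Z`. -/
noncomputable def pauli : Fin 4 → Matrix (Fin 2) (Fin 2) ℂ
  | 0 => !![1, 0; 0, 1]
  | 1 => !![0, 1; 1, 0]
  | 2 => !![0, -Complex.I; Complex.I, 0]
  | 3 => !![1, 0; 0, -1]

/-- Kraus operators of the two-qubit amplitude damping channel `Φ_{x,y,z}`, acting on
`ℂ⁴ = ℂ² ⊗ ℂ²` with basis `e_0 = e_{(0,0)}, e_1 = e_{(0,1)}, e_2 = e_{(1,0)},
e_3 = e_{(1,1)}` indexed by `Fin 2 × Fin 2`. -/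
noncomputable def ADk (x y z : ℝ) : Fin 4 → Matrix (Fin 2 × Fin 2) (Fin 2 × Fin 2) ℂ
  | 0 => Matrix.diagonal (fun p => if p = ((0 : Fin 2), (0 : Fin 2)) then 1
          else if p = ((1 : Fin 2), (1 : Fin 2)) then (Real.sqrt (1 - 2*y - z) : ℂ)
          else (Real.sqrt (1 - x) : ℂ))
  | 1 => Matrix.single (0, 0) (0, 1) (Real.sqrt x : ℂ)
        + Matrix.single (1, 0) (1, 1) (Real.sqrt y : ℂ)
  | 2 => Matrix.single (0, 0) (1, 0) (Real.sqrt x : ℂ)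
        + Matrix.single (0, 1) (1, 1) (Real.sqrt y : ℂ)
  | 3 => Matrix.single (0, 0) (1, 1) (Real.sqrt z : ℂ)

/-- The two-qubit amplitude damping channel `Φ_{x,y,z}`. -/
noncomputable def Phi (x y z : ℝ) (ρ : Matrix (Fin 2 × Fin 2) (Fin 2 × Fin 2) ℂ) :
    Matrix (Fin 2 × Fin 2) (Fin 2 × Fin 2) ℂ :=
  ∑ i : Fin 4, ADk x y z i * ρ * (ADk x y z i)ᴴ

/-- The probabilities `q_{P⊗P'}` of the Pauli twirl of `Φ_{x,y,z}`, with
`s₁ = √(1−x)` and `s₂ = √(1−2y−z)`. -/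
noncomputable def qcoef (x y z : ℝ) : Fin 4 → Fin 4 → ℝ
  | 0, 0 => ((1 + 2 * Real.sqrt (1 - x) + Real.sqrt (1 - 2*y - z)) / 4) ^ 2
  | 0, 3 => ((1 - Real.sqrt (1 - 2*y - z)) / 4) ^ 2
  | 3, 0 => ((1 - Real.sqrt (1 - 2*y - z)) / 4) ^ 2
  | 3, 3 => ((1 - 2 * Real.sqrt (1 - x) + Real.sqrt (1 - 2*y - z)) / 4) ^ 2
  | 0, 1 => ((Real.sqrt x + Real.sqrt y) / 4) ^ 2
  | 0, 2 => ((Real.sqrt x + Real.sqrt y) / 4) ^ 2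
  | 1, 0 => ((Real.sqrt x + Real.sqrt y) / 4) ^ 2
  | 2, 0 => ((Real.sqrt x + Real.sqrt y) / 4) ^ 2
  | 3, 1 => ((Real.sqrt x - Real.sqrt y) / 4) ^ 2
  | 3, 2 => ((Real.sqrt x - Real.sqrt y) / 4) ^ 2
  | 1, 3 => ((Real.sqrt x - Real.sqrt y) / 4) ^ 2
  | 2, 3 => ((Real.sqrt x - Real.sqrt y) / 4) ^ 2
  | 1, 1 => z / 16
  | 1, 2 => z / 16
  | 2, 1 => z / 16
  | 2, 2 => z / 16

/-!
Write each Kraus operator in the Pauli basis, `A_i = ∑_P c_{i,P} P`. Conjugating by a Pauli `Q`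
multiplies `c_{i,P}` by the sign of `Q P Q = ±P`, and these signs are orthogonal characters of the
Pauli group: averaging over `Q` kills every cross term `P ρ P'†` with `P ≠ P'`. Hence the twirl is
the Pauli channel with `q_P = ∑_i |c_{i,P}|²`, and the coefficients of the four Kraus operators give
exactly the stated `q_P`.
-/

section Twirl

variable {ι κ n : Type*} [Fintype ι] [Fintype κ] [Fintype n]

lemma sum_smul_mul_mul_conjTranspose_sum_smul (u : ι → ℂ) (σ : ι → Matrix n n ℂ)
    (ρ : Matrix n n ℂ) :
    (∑ a, u a • σ a) * ρ * (∑ a, u a • σ a)ᴴ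
      = ∑ a, ∑ b, (u a * star (u b)) • (σ a * ρ * (σ b)ᴴ) := by
  simp only [conjTranspose_sum, conjTranspose_smul, Finset.sum_mul, Finset.mul_sum,
    smul_mul_assoc, mul_smul_comm, Finset.smul_sum, smul_smul]
  rw [Finset.sum_comm]
  simp only [mul_comm (star _)]

theorem sum_conj_kraus_conj_eq_card_smul [DecidableEq ι] (σ : ι → Matrix n n ℂ)
    (ε : ι → ι → ℂ) (hσ : ∀ p a, σ p * σ a * σ p = ε p a • σ a)
    (hε : ∀ a b, ∑ p, ε p a * star (ε p b) = if a = b then (Fintype.card ι : ℂ) else 0)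
    (A : κ → Matrix n n ℂ) (c : κ → ι → ℂ) (hA : ∀ i, A i = ∑ a, c i a • σ a)
    (ρ : Matrix n n ℂ) :
    ∑ p, σ p * (∑ i, A i * (σ p * ρ * (σ p)ᴴ) * (A i)ᴴ) * (σ p)ᴴ
      = (Fintype.card ι : ℂ) •
          ∑ a, ((∑ i, Complex.normSq (c i a) : ℝ) : ℂ) • (σ a * ρ * (σ a)ᴴ) := by
  have hconj (p : ι) (i : κ) : σ p * A i * σ p = ∑ a, (c i a * ε p a) • σ a := by
    simp only [hA, Finset.mul_sum, Finset.sum_mul, mul_smul_comm, smul_mul_assoc, hσ, smul_smul]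
  calc ∑ p, σ p * (∑ i, A i * (σ p * ρ * (σ p)ᴴ) * (A i)ᴴ) * (σ p)ᴴ
      = ∑ p, ∑ i, (σ p * A i * σ p) * ρ * (σ p * A i * σ p)ᴴ := by
        simp only [Finset.mul_sum, Finset.sum_mul, conjTranspose_mul, Matrix.mul_assoc]
    _ = ∑ i, ∑ a, ∑ b, (c i a * star (c i b) * ∑ p, ε p a * star (ε p b)) •
          (σ a * ρ * (σ b)ᴴ) := by
        simp only [hconj, sum_smul_mul_mul_conjTranspose_sum_smul, Finset.mul_sum,
          Finset.sum_smul]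
        rw [Finset.sum_comm]
        refine Finset.sum_congr rfl fun i _ => ?_
        rw [Finset.sum_comm]
        refine Finset.sum_congr rfl fun a _ => ?_
        rw [Finset.sum_comm]
        refine Finset.sum_congr rfl fun b _ => Finset.sum_congr rfl fun p _ => ?_
        rw [star_mul]; ring_nf
    _ = _ := by
        simp only [hε, mul_ite, mul_zero, ite_smul, zero_smul, Finset.sum_ite_eq,
          Finset.mem_univ, if_true, Finset.smul_sum, smul_smul]
        rw [Finset.sum_comm]
        refine Finset.sum_congr rfl fun a _ => ?_
        rw [← Finset.sum_smul, Complex.ofReal_sum, Finset.mul_sum]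
        refine congrArg (· • _) (Finset.sum_congr rfl fun i _ => ?_)
        rw [← Complex.mul_conj, Complex.star_def]; ring

end Twirl

def pauliSign (p a : Fin 4) : ℂ := if p = 0 ∨ a = 0 ∨ p = a then 1 else -1

lemma pauli_mul_pauli_mul_pauli (p a : Fin 4) :
    pauli p * pauli a * pauli p = pauliSign p a • pauli a := by
  fin_cases p <;> fin_cases a <;> ext i j <;> fin_cases i <;> fin_cases j <;>
    simp [pauli, pauliSign, Matrix.mul_apply, Fin.sum_univ_two]

lemma sum_pauliSign_mul_star_pauliSign (a b : Fin 4) :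
    ∑ p, pauliSign p a * star (pauliSign p b) = if a = b then 4 else 0 := by
  fin_cases a <;> fin_cases b <;> simp [pauliSign, Fin.sum_univ_four] <;> norm_num

section Kronecker

variable {ι ι' : Type*}

lemma kronecker_mul_kronecker_mul_kronecker_eq_smul {m m' : Type*} [Fintype m] [Fintype m']
    (σ : ι → Matrix m m ℂ) (τ : ι' → Matrix m' m' ℂ) (ε : ι → ι → ℂ) (δ : ι' → ι' → ℂ)
    (hσ : ∀ p a, σ p * σ a * σ p = ε p a • σ a) (hτ : ∀ p a, τ p * τ a * τ p = δ p a • τ a)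
    (p a : ι × ι') :
    (σ p.1 ⊗ₖ τ p.2) * (σ a.1 ⊗ₖ τ a.2) * (σ p.1 ⊗ₖ τ p.2)
      = (ε p.1 a.1 * δ p.2 a.2) • (σ a.1 ⊗ₖ τ a.2) := by
  rw [← mul_kronecker_mul, ← mul_kronecker_mul, hσ, hτ, smul_kronecker, kronecker_smul,
    smul_smul]

lemma sum_prod_mul_star_eq_ite [Fintype ι] [Fintype ι'] [DecidableEq ι] [DecidableEq ι']
    (ε : ι → ι → ℂ) (δ : ι' → ι' → ℂ)
    (hε : ∀ a b, ∑ p, ε p a * star (ε p b) = if a = b then (Fintype.card ι : ℂ) else 0)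
    (hδ : ∀ a b, ∑ p, δ p a * star (δ p b) = if a = b then (Fintype.card ι' : ℂ) else 0)
    (a b : ι × ι') :
    ∑ p : ι × ι', ε p.1 a.1 * δ p.2 a.2 * star (ε p.1 b.1 * δ p.2 b.2)
      = if a = b then (Fintype.card (ι × ι') : ℂ) else 0 := by
  have hsplit : ∑ p : ι × ι', ε p.1 a.1 * δ p.2 a.2 * star (ε p.1 b.1 * δ p.2 b.2)
      = (∑ p, ε p a.1 * star (ε p b.1)) * ∑ q, δ q a.2 * star (δ q b.2) := by
    rw [Fintype.sum_prod_type, Finset.sum_mul_sum]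
    refine Finset.sum_congr rfl fun p _ => Finset.sum_congr rfl fun q _ => ?_
    rw [star_mul]; ring
  rw [hsplit, hε, hδ, Fintype.card_prod]
  split_ifs <;> simp_all [Prod.ext_iff]

end Kronecker

/-- Row `a`, column `b` holds the coefficient of `pauli a ⊗ₖ pauli b` in `ADk x y z i`; it comes
from `|0⟩⟨1| = (X + iY)/2`, `|0⟩⟨0| = (𝟙 + Z)/2` and `|1⟩⟨1| = (𝟙 - Z)/2`. -/
noncomputable def krausPauliCoeff (x y z : ℝ) : Fin 4 → Matrix (Fin 4) (Fin 4) ℂ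
  | 0 => !![(1 + 2 * √(1 - x) + √(1 - 2*y - z)) / 4, 0, 0, (1 - √(1 - 2*y - z)) / 4;
            0, 0, 0, 0;
            0, 0, 0, 0;
            (1 - √(1 - 2*y - z)) / 4, 0, 0, (1 - 2 * √(1 - x) + √(1 - 2*y - z)) / 4]
  | 1 => !![0, (√x + √y) / 4, Complex.I * (√x + √y) / 4, 0;
            0, 0, 0, 0;
            0, 0, 0, 0;
            0, (√x - √y) / 4, Complex.I * (√x - √y) / 4, 0]
  | 2 => !![0, 0, 0, 0;
            (√x + √y) / 4, 0, 0, (√x - √y) / 4;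
            Complex.I * (√x + √y) / 4, 0, 0, Complex.I * (√x - √y) / 4;
            0, 0, 0, 0]
  | 3 => !![0, 0, 0, 0;
            0, √z / 4, Complex.I * √z / 4, 0;
            0, Complex.I * √z / 4, -√z / 4, 0;
            0, 0, 0, 0]

lemma ADk_eq_sum_krausPauliCoeff_smul (x y z : ℝ) (i : Fin 4) :
    ADk x y z i
      = ∑ a : Fin 4 × Fin 4, krausPauliCoeff x y z i a.1 a.2 • (pauli a.1 ⊗ₖ pauli a.2) := by
  ext ⟨r₁, r₂⟩ ⟨s₁, s₂⟩
  fin_cases i <;> fin_cases r₁ <;> fin_cases r₂ <;> fin_cases s₁ <;> fin_cases s₂ <;>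
    simp [ADk, krausPauliCoeff, pauli, Fintype.sum_prod_type, Fin.sum_univ_four,
      Matrix.sum_apply, Complex.ext_iff] <;> ring

lemma qcoef_eq_sum_normSq_krausPauliCoeff (x y z : ℝ) (hz : 0 ≤ z) (p q : Fin 4) :
    qcoef x y z p q = ∑ i, Complex.normSq (krausPauliCoeff x y z i p q) := by
  fin_cases p <;> fin_cases q <;>
    simp [qcoef, krausPauliCoeff, Fin.sum_univ_four, Complex.normSq_apply] <;>
    ring_nf <;> simp [hz]

theorem pauli_twirl_of_Phi_xyz_general (x y z : ℝ) (hz0 : 0 ≤ z)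
    (ρ : Matrix (Fin 2 × Fin 2) (Fin 2 × Fin 2) ℂ) :
    ((16 : ℂ))⁻¹ • ∑ p : Fin 4, ∑ q : Fin 4,
        (pauli p ⊗ₖ pauli q) *
          Phi x y z ((pauli p ⊗ₖ pauli q) * ρ * (pauli p ⊗ₖ pauli q)ᴴ) *
          (pauli p ⊗ₖ pauli q)ᴴ
      = ∑ p : Fin 4, ∑ q : Fin 4, (qcoef x y z p q : ℂ) •
          ((pauli p ⊗ₖ pauli q) * ρ * (pauli p ⊗ₖ pauli q)ᴴ) := by
  have htwirl := sum_conj_kraus_conj_eq_card_smul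
    (fun a : Fin 4 × Fin 4 => pauli a.1 ⊗ₖ pauli a.2)
    (fun p a => pauliSign p.1 a.1 * pauliSign p.2 a.2)
    (kronecker_mul_kronecker_mul_kronecker_eq_smul _ _ _ _
      pauli_mul_pauli_mul_pauli pauli_mul_pauli_mul_pauli)
    (sum_prod_mul_star_eq_ite _ _
      sum_pauliSign_mul_star_pauliSign sum_pauliSign_mul_star_pauliSign)
    (ADk x y z) (fun i a => krausPauliCoeff x y z i a.1 a.2)
    (ADk_eq_sum_krausPauliCoeff_smul x y z) ρ
  simp only [Fintype.sum_prod_type, ← qcoef_eq_sum_normSq_krausPauliCoeff x y z hz0] at htwirl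
  simp only [Phi, htwirl, smul_smul]
  norm_num

/-- The Pauli twirl of `Φ_{x,y,z}` over the 16 two-qubit Paulis is the
Pauli channel with probabilities `q_{P⊗P'}`. -/
theorem pauli_twirl_of_Phi_xyz (x y z : ℝ)
    (hx0 : 0 ≤ x) (hy0 : 0 ≤ y) (hz0 : 0 ≤ z) (hx1 : x ≤ 1) (hyz : 2*y + z ≤ 1)
    (ρ : Matrix (Fin 2 × Fin 2) (Fin 2 × Fin 2) ℂ) :
    ((16 : ℂ))⁻¹ • ∑ p : Fin 4, ∑ q : Fin 4,
        (pauli p ⊗ₖ pauli q) *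
          Phi x y z ((pauli p ⊗ₖ pauli q) * ρ * (pauli p ⊗ₖ pauli q)ᴴ) *
          (pauli p ⊗ₖ pauli q)ᴴ
      = ∑ p : Fin 4, ∑ q : Fin 4, (qcoef x y z p q : ℂ) •
          ((pauli p ⊗ₖ pauli q) * ρ * (pauli p ⊗ₖ pauli q)ᴴ) :=
  pauli_twirl_of_Phi_xyz_general x y z hz0 ρ
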